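/- arXiv:2007.12257 — 3 statements merged into one kernel-verified Lean document; each statement's English description precedes it below -/
import Mathlib

section
/- Let t and m be positive integers, G a digraph, and A, B vertex sets of G. If there is a family of m·t directed paths from A to B in G such that every vertex of G lies on at most t of the paths, then there exist m pairwise vertex-disjoint directed paths from A to B in G, each contained in the union of the original family. -/
variable {V : Type}

/-- `w` is a directed walk of length `n` in the digraph with edge relation `R`. -/
def IsWalkOn (R : V → V → Prop) (w : ℕ → V) (n : ℕ) : Prop :=
  ∀ i < n, R (w i) (w (i + 1))

/-- The set of vertices used by the walk `w` of length `n`. -/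
def walkVerts (w : ℕ → V) (n : ℕ) : Set V :=
  {v | ∃ i ≤ n, w i = v}

/-- The set of directed edges used by the walk `w` of length `n`. -/
def walkEdges (w : ℕ → V) (n : ℕ) : Set (V × V) :=
  {e | ∃ i < n, w i = e.1 ∧ w (i + 1) = e.2}

/-- A directed path: a walk with no repeated vertices. -/
def IsPathOn (R : V → V → Prop) (w : ℕ → V) (n : ℕ) : Prop :=
  IsWalkOn R w n ∧ ∀ i ≤ n, ∀ j ≤ n, w i = w j → i = j

/-- A directed cycle of length `n`: a closed walk with no repeated vertices
except that the last vertex equals the first. -/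
def IsCycleOn (R : V → V → Prop) (w : ℕ → V) (n : ℕ) : Prop :=
  0 < n ∧ IsWalkOn R w n ∧ w n = w 0 ∧ ∀ i < n, ∀ j < n, w i = w j → i = j

/-- `v` is reachable from `u` by a directed walk all of whose vertices lie in `S`. -/
def ReachIn (R : V → V → Prop) (S : Set V) (u v : V) : Prop :=
  ∃ w n, IsWalkOn R w n ∧ w 0 = u ∧ w n = v ∧ ∀ i ≤ n, w i ∈ S

/-- Every two vertices of `C` are mutually reachable inside `S`. -/
def StrongIn (R : V → V → Prop) (S C : Set V) : Prop :=
  ∀ u ∈ C, ∀ v ∈ C, ReachIn R S u v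

/-- `C` is a strongly connected component of the subgraph induced on `S`. -/
def IsSCCOf (R : V → V → Prop) (S C : Set V) : Prop :=
  C.Nonempty ∧ C ⊆ S ∧ StrongIn R S C ∧
    ∀ C', C ⊆ C' → C' ⊆ S → StrongIn R S C' → C' = C

/-- A directed `X`-walk: endpoints in `X`, all internal vertices outside `X`. -/
def IsXWalk (R : V → V → Prop) (X : Set V) (w : ℕ → V) (n : ℕ) : Prop :=
  IsWalkOn R w n ∧ w 0 ∈ X ∧ w n ∈ X ∧ ∀ i, 0 < i → i < n → w i ∉ X

/-- `S` meets every directed odd cycle. -/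
def HitsOdd (R : V → V → Prop) (S : Set V) : Prop :=
  ∀ c m, IsCycleOn R c m → Odd m → ∃ i < m, c i ∈ S

/-- `S` meets every directed odd cycle of the subgraph induced on `W`. -/
def HitsOddIn (R : V → V → Prop) (S W : Set V) : Prop :=
  ∀ c m, IsCycleOn R c m → Odd m → walkVerts c m ⊆ W → ∃ i < m, c i ∈ S

/-- A half-integral packing of `k` directed odd cycles: every vertex lies in at most
two of the `k` cycles. -/
def HalfPackOdd (R : V → V → Prop) (k : ℕ) : Prop :=
  ∃ (c : Fin k → ℕ → V) (len : Fin k → ℕ),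
    (∀ i, IsCycleOn R (c i) (len i) ∧ Odd (len i)) ∧
    ∀ v, {i | v ∈ walkVerts (c i) (len i)}.ncard ≤ 2

/-- A linkage of order `s` from `A` to `B` avoiding `Z`: `s` pairwise vertex-disjoint
directed paths from `A` to `B`, none of which meets `Z`. -/
def ExLinkage (R : V → V → Prop) (A B Z : Set V) (s : ℕ) : Prop :=
  ∃ (P : Fin s → ℕ → V) (len : Fin s → ℕ),
    (∀ i, IsPathOn R (P i) (len i) ∧ P i 0 ∈ A ∧ P i (len i) ∈ B ∧
      Disjoint (walkVerts (P i) (len i)) Z) ∧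
    ∀ i j, i ≠ j → Disjoint (walkVerts (P i) (len i)) (walkVerts (P j) (len j))

/-- `T` is `r`-well-linked: for all disjoint equal-size subsets `A, B ⊆ T` of size at
least `r`, there are linkages of order `|A|` from `A` to `B` and from `B` to `A` in
`G - (T \ (A ∪ B))`. -/
def WellLinked (R : V → V → Prop) (T : Finset V) (r : ℕ) : Prop :=
  ∀ A B : Finset V, A ⊆ T → B ⊆ T → Disjoint A B → A.card = B.card → r ≤ A.card →
    ExLinkage R (↑A) (↑B) ((↑T : Set V) \ (↑A ∪ ↑B)) A.card ∧
    ExLinkage R (↑B) (↑A) ((↑T : Set V) \ (↑A ∪ ↑B)) A.card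

/-- `S` is `k`-linked: for every vertex set `X` with `|X| < k`, there is a unique
strongly connected component of `G - X` containing more than half of the vertices
of `S`. -/
def KLinked (R : V → V → Prop) (S : Finset V) (k : ℕ) : Prop :=
  ∀ X : Finset V, X.card < k →
    ∃! C : Set V, IsSCCOf R ((↑X : Set V)ᶜ) C ∧ S.card < 2 * ((↑S : Set V) ∩ C).ncard

/-- A bramble: a family of (vertex sets of) strongly connected subgraphs which
pairwise either intersect or are joined by edges in both directions. -/
def IsBramble (R : V → V → Prop) (B : Set (Set V)) : Prop :=
  (∀ C ∈ B, C.Nonempty ∧ StrongIn R C C) ∧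
  ∀ C₁ ∈ B, ∀ C₂ ∈ B, (C₁ ∩ C₂).Nonempty ∨
    ((∃ u ∈ C₁, ∃ v ∈ C₂, R u v) ∧ (∃ u ∈ C₂, ∃ v ∈ C₁, R u v))

/-- A walk in the underlying undirected graph of the digraph with edge relation `R`. -/
def IsUWalkOn (R : V → V → Prop) (w : ℕ → V) (n : ℕ) : Prop :=
  ∀ i < n, R (w i) (w (i + 1)) ∨ R (w (i + 1)) (w i)

/-- A separation `(C, D)` of a digraph: `C ∪ D = V` and there is no edge from
`C \ D` to `D \ C`. -/
def IsSeparation (R : V → V → Prop) (C D : Set V) : Prop :=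
  C ∪ D = Set.univ ∧ ∀ u ∈ C \ D, ∀ v ∈ D \ C, ¬ R u v

namespace MAux

/-- `X` meets every `A`–`B` walk. -/
def Sep (R : V → V → Prop) (A B X : Set V) : Prop :=
  ∀ w n, IsWalkOn R w n → w 0 ∈ A → w n ∈ B → ∃ i ≤ n, w i ∈ X

def DisjPaths (R : V → V → Prop) (A B : Set V) (k : ℕ) : Prop :=
  ∃ (P : Fin k → ℕ → V) (len : Fin k → ℕ),
    (∀ i, IsPathOn R (P i) (len i) ∧ P i 0 ∈ A ∧ P i (len i) ∈ B) ∧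
    ∀ i j, i ≠ j → Disjoint (walkVerts (P i) (len i)) (walkVerts (P j) (len j))

lemma mem_walkVerts {w : ℕ → V} {n : ℕ} {v : V} :
    v ∈ walkVerts w n ↔ ∃ i ≤ n, w i = v := Iff.rfl

lemma walkVerts_self {w : ℕ → V} {n i : ℕ} (h : i ≤ n) : w i ∈ walkVerts w n :=
  ⟨i, h, rfl⟩

lemma walkVerts_mono {w : ℕ → V} {n m : ℕ} (h : n ≤ m) :
    walkVerts w n ⊆ walkVerts w m := fun _ ⟨i, hi, he⟩ => ⟨i, hi.trans h, he⟩

lemma walkVerts_finite (w : ℕ → V) (n : ℕ) : (walkVerts w n).Finite := by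
  have : walkVerts w n = w '' Set.Iic n := by
    ext v; simp [walkVerts, Set.mem_image]
  rw [this]; exact (Set.finite_Iic n).image w

lemma walk_mono_rel {R R' : V → V → Prop} (h : ∀ u v, R u v → R' u v)
    {w : ℕ → V} {n : ℕ} (hw : IsWalkOn R w n) : IsWalkOn R' w n :=
  fun i hi => h _ _ (hw i hi)

lemma path_mono_rel {R R' : V → V → Prop} (h : ∀ u v, R u v → R' u v)
    {w : ℕ → V} {n : ℕ} (hw : IsPathOn R w n) : IsPathOn R' w n :=
  ⟨walk_mono_rel h hw.1, hw.2⟩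

lemma walk_mono_len {R : V → V → Prop} {w : ℕ → V} {n m : ℕ}
    (hw : IsWalkOn R w m) (h : n ≤ m) : IsWalkOn R w n :=
  fun i hi => hw i (lt_of_lt_of_le hi h)

lemma path_mono_len {R : V → V → Prop} {w : ℕ → V} {n m : ℕ}
    (hw : IsPathOn R w m) (h : n ≤ m) : IsPathOn R w n :=
  ⟨walk_mono_len hw.1 h, fun i hi j hj he => hw.2 i (hi.trans h) j (hj.trans h) he⟩

/-- suffix of a walk -/
lemma suffix_walk {R : V → V → Prop} {w : ℕ → V} {n b : ℕ}
    (hw : IsWalkOn R w n) (hb : b ≤ n) : IsWalkOn R (fun j => w (b + j)) (n - b) := by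
  intro i hi
  have : b + i < n := by omega
  exact hw (b + i) this

lemma suffix_path {R : V → V → Prop} {w : ℕ → V} {n b : ℕ}
    (hw : IsPathOn R w n) (hb : b ≤ n) : IsPathOn R (fun j => w (b + j)) (n - b) := by
  refine ⟨suffix_walk hw.1 hb, ?_⟩
  intro i hi j hj he
  have := hw.2 (b + i) (by omega) (b + j) (by omega) he
  omega

lemma suffix_verts {w : ℕ → V} {n b : ℕ} (hb : b ≤ n) :
    walkVerts (fun j => w (b + j)) (n - b) ⊆ walkVerts w n := by
  rintro v ⟨i, hi, rfl⟩
  exact ⟨b + i, by omega, rfl⟩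

/-- concatenation of walks -/
def catW (p : ℕ → V) (a : ℕ) (q : ℕ → V) : ℕ → V := fun i => if i ≤ a then p i else q (i - a)

lemma catW_left {p : ℕ → V} {a : ℕ} {q : ℕ → V} {i : ℕ} (h : i ≤ a) :
    catW p a q i = p i := if_pos h

lemma catW_right {p : ℕ → V} {a : ℕ} {q : ℕ → V} (hj : p a = q 0) (i : ℕ) :
    catW p a q (a + i) = q i := by
  rcases Nat.eq_zero_or_pos i with rfl | hi
  · simpa [catW] using hj
  · have : ¬ (a + i ≤ a) := by omega
    simp only [catW, if_neg this]
    congr 1; omega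

lemma catW_walk {R : V → V → Prop} {p : ℕ → V} {a np : ℕ} {q : ℕ → V} {nq : ℕ}
    (hp : IsWalkOn R p np) (ha : a ≤ np) (hq : IsWalkOn R q nq) (hj : p a = q 0) :
    IsWalkOn R (catW p a q) (a + nq) := by
  intro i hi
  rcases lt_or_ge i a with h1 | h1
  · rw [catW_left (le_of_lt h1), catW_left (by omega : i + 1 ≤ a)]
    exact hp i (by omega)
  · obtain ⟨j, rfl⟩ := Nat.exists_eq_add_of_le h1
    rw [catW_right hj, show a + j + 1 = a + (j + 1) by omega, catW_right hj]
    exact hq j (by omega)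

lemma catW_mem_verts {p : ℕ → V} {a : ℕ} {q : ℕ → V} {nq : ℕ} (hj : p a = q 0) {i : ℕ}
    (hi : i ≤ a + nq) : (i ≤ a ∧ catW p a q i = p i) ∨
      (∃ j, 0 < j ∧ j ≤ nq ∧ i = a + j ∧ catW p a q i = q j) := by
  rcases le_or_gt i a with h | h
  · exact Or.inl ⟨h, catW_left h⟩
  · refine Or.inr ⟨i - a, by omega, by omega, by omega, ?_⟩
    have := catW_right (q := q) (p := p) hj (i - a)
    rwa [show a + (i - a) = i by omega] at this

lemma catW_verts {p : ℕ → V} {a : ℕ} {q : ℕ → V} {nq : ℕ} (hj : p a = q 0) :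
    walkVerts (catW p a q) (a + nq) = walkVerts p a ∪ walkVerts q nq := by
  ext v
  constructor
  · rintro ⟨i, hi, rfl⟩
    rcases catW_mem_verts hj hi with ⟨h1, h2⟩ | ⟨j, _, hj2, _, h2⟩
    · exact Or.inl ⟨i, h1, h2.symm⟩
    · exact Or.inr ⟨j, hj2, h2.symm⟩
  · rintro (⟨i, hi, rfl⟩ | ⟨i, hi, rfl⟩)
    · exact ⟨i, by omega, catW_left hi⟩
    · exact ⟨a + i, by omega, catW_right hj i⟩

lemma catW_path {R : V → V → Prop} {p : ℕ → V} {a : ℕ} {q : ℕ → V} {nq : ℕ}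
    (hp : IsPathOn R p a) (hq : IsPathOn R q nq) (hj : p a = q 0)
    (hint : ∀ v, v ∈ walkVerts p a → v ∈ walkVerts q nq → v = p a) :
    IsPathOn R (catW p a q) (a + nq) := by
  refine ⟨catW_walk hp.1 le_rfl hq.1 hj, ?_⟩
  intro i hi j hjle he
  rcases catW_mem_verts hj hi with ⟨h1, h2⟩ | ⟨ji, hji0, hjile, hje, h2⟩ <;>
    rcases catW_mem_verts hj hjle with ⟨g1, g2⟩ | ⟨jj, hjj0, hjjle, hjje, g2⟩
  · rw [h2, g2] at he; exact hp.2 i h1 j g1 he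
  · rw [h2, g2] at he
    have hv : p i = p a := hint _ ⟨i, h1, rfl⟩ ⟨jj, hjjle, he.symm⟩
    have : i = a := hp.2 i h1 a le_rfl hv
    subst this
    have : q jj = q 0 := by rw [← he, hv, hj]
    have := hq.2 jj hjjle 0 (Nat.zero_le _) this
    omega
  · rw [h2, g2] at he
    have hv : p j = p a := hint _ ⟨j, g1, rfl⟩ ⟨ji, hjile, he⟩
    have : j = a := hp.2 j g1 a le_rfl hv
    subst this
    have : q ji = q 0 := by rw [he, hv, hj]
    have := hq.2 ji hjile 0 (Nat.zero_le _) this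
    omega
  · rw [h2, g2] at he
    have := hq.2 ji hjile jj hjjle he
    omega

/-- prepend a vertex -/
def prep (x : V) (q : ℕ → V) : ℕ → V := fun i => match i with
  | 0 => x
  | j + 1 => q j

lemma prep_walk {R : V → V → Prop} {x : V} {q : ℕ → V} {nq : ℕ}
    (hx : R x (q 0)) (hq : IsWalkOn R q nq) : IsWalkOn R (prep x q) (nq + 1) := by
  intro i hi
  match i with
  | 0 => exact hx
  | j + 1 => exact hq j (by omega)

lemma prep_verts {x : V} {q : ℕ → V} {nq : ℕ} :
    walkVerts (prep x q) (nq + 1) = insert x (walkVerts q nq) := by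
  ext v
  constructor
  · rintro ⟨i, hi, rfl⟩
    match i with
    | 0 => exact Or.inl rfl
    | j + 1 => exact Or.inr ⟨j, by omega, rfl⟩
  · rintro (rfl | ⟨i, hi, rfl⟩)
    · exact ⟨0, by omega, rfl⟩
    · exact ⟨i + 1, by omega, rfl⟩

lemma prep_path {R : V → V → Prop} {x : V} {q : ℕ → V} {nq : ℕ}
    (hq : IsPathOn R q nq) (hx : R x (q 0)) (hnx : x ∉ walkVerts q nq) :
    IsPathOn R (prep x q) (nq + 1) := by
  refine ⟨prep_walk hx hq.1, ?_⟩
  intro i hi j hj he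
  match i, j with
  | 0, 0 => rfl
  | 0, j + 1 => exact absurd ⟨j, by omega, he.symm⟩ hnx
  | i + 1, 0 => exact absurd ⟨i, by omega, he⟩ hnx
  | i + 1, j + 1 => have := hq.2 i (by omega) j (by omega) he; omega


lemma master {R : V → V → Prop} {A B S X Y : Set V} {p q : ℕ → V} {np nq : ℕ}
    (hS : Sep R A B S)
    (hSX : S ⊆ X) (hSY : S ⊆ Y) (hXY : ∀ v, v ∈ X → v ∈ Y → v ∈ S)
    (hp : IsWalkOn R p np) (hp0 : p 0 ∈ A) (hpn : p np ∈ X) (hpX : ∀ i < np, p i ∉ X)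
    (hq : IsWalkOn R q nq) (hq0 : q 0 ∈ Y) (hqn : q nq ∈ B)
    (hqY : ∀ i, 0 < i → i ≤ nq → q i ∉ Y)
    {a b : ℕ} (ha : a ≤ np) (hb : b ≤ nq) (heq : p a = q b) :
    p a ∈ S ∧ a = np ∧ b = 0 := by
  set q' : ℕ → V := fun j => q (b + j) with hq'def
  have hq'w : IsWalkOn R q' (nq - b) := suffix_walk hq hb
  have hj : p a = q' 0 := by simpa [hq'def] using heq
  have hw : IsWalkOn R (catW p a q') (a + (nq - b)) := catW_walk hp ha hq'w hj
  have h0 : catW p a q' 0 = p 0 := catW_left (Nat.zero_le a)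
  have hend : catW p a q' (a + (nq - b)) = q nq := by
    rw [catW_right hj]
    simp only [hq'def]; congr 1; omega
  obtain ⟨i, hi, hiS⟩ := hS _ _ hw (by rw [h0]; exact hp0) (by rw [hend]; exact hqn)
  have hpaX : p a ∈ X := by
    by_contra hvX
    have hane : a < np := lt_of_le_of_ne ha (fun h => hvX (h ▸ hpn))
    rcases catW_mem_verts hj hi with ⟨h1, h2⟩ | ⟨jj, hj0, hjle, hje, h2⟩
    · rw [h2] at hiS
      exact hpX i (by omega) (hSX hiS)
    · rw [h2] at hiS
      exact hqY (b + jj) (by omega) (by omega) (hSY hiS)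
  have hanp : a = np := by
    by_contra h
    exact hpX a (lt_of_le_of_ne ha h) hpaX
  have hpaY : p a ∈ Y := by
    by_contra hvY
    rcases catW_mem_verts hj hi with ⟨h1, h2⟩ | ⟨jj, hj0, hjle, hje, h2⟩
    · rw [h2] at hiS
      rcases lt_or_eq_of_le h1 with h1' | rfl
      · exact hpX i (by omega) (hSX hiS)
      · exact hvY (hSY hiS)
    · rw [h2] at hiS
      exact hqY (b + jj) (by omega) (by omega) (hSY hiS)
  have hpaS : p a ∈ S := hXY _ hpaX hpaY
  refine ⟨hpaS, hanp, ?_⟩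
  by_contra hb0
  exact hqY b (by omega) hb (heq ▸ hpaY)

lemma exists_inj_of_ncard {k : ℕ} {C : Set V} (hC : C.Finite) (hk : k ≤ C.ncard) :
    ∃ f : Fin k → V, Function.Injective f ∧ ∀ i, f i ∈ C := by
  classical
  obtain ⟨t, htC, htcard⟩ := Set.exists_subset_card_eq hk
  have htfin : t.Finite := hC.subset htC
  have := htfin.fintype
  have hcard : Nat.card t = k := by rwa [Nat.card_coe_set_eq]
  have hcard' : Fintype.card t = k := by rwa [← Nat.card_eq_fintype_card]
  let e := (Fintype.equivFinOfCardEq hcard').symm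
  refine ⟨fun i => (e i : V), ?_, fun i => htC (e i).2⟩
  intro i j hij
  exact e.injective (Subtype.val_injective hij)

lemma surj_of_inj_ncard {k : ℕ} {X : Set V} {f : Fin k → V} (hinj : Function.Injective f)
    (hmem : ∀ i, f i ∈ X) (hX : X.Finite) (hcard : X.ncard = k) :
    ∀ v ∈ X, ∃ i, f i = v := by
  have hsub : Set.range f ⊆ X := by rintro v ⟨i, rfl⟩; exact hmem i
  have hr : (Set.range f).ncard = k := by
    rw [← Set.image_univ, Set.ncard_image_of_injective _ hinj, Set.ncard_univ]
    simp
  have : Set.range f = X := Set.eq_of_subset_of_ncard_le hsub (by omega) hX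
  intro v hv
  rw [← this] at hv
  exact hv


lemma disjPaths_mono {R R' : V → V → Prop} (h : ∀ u v, R u v → R' u v) {A B : Set V} {k : ℕ}
    (hd : DisjPaths R A B k) : DisjPaths R' A B k := by
  obtain ⟨P, len, h1, h2⟩ := hd
  exact ⟨P, len, fun i => ⟨path_mono_rel h (h1 i).1, (h1 i).2⟩, h2⟩

lemma noedge_case [Finite V] {R : V → V → Prop} (hE : ∀ u v : V, ¬ R u v) {A B : Set V} {k : ℕ}
    (hsep : ∀ X : Set V, Sep R A B X → k ≤ X.ncard) : DisjPaths R A B k := by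
  have hAB : Sep R A B (A ∩ B) := by
    intro w n hw h0 hn
    rcases Nat.eq_zero_or_pos n with rfl | hpos
    · exact ⟨0, le_rfl, h0, hn⟩
    · exact absurd (hw 0 hpos) (hE _ _)
  obtain ⟨f, hfinj, hfmem⟩ := exists_inj_of_ncard (Set.toFinite _) (hsep _ hAB)
  refine ⟨fun i _ => f i, fun _ => 0, fun i => ?_, fun i j hij => ?_⟩
  · refine ⟨⟨fun a ha => absurd (show a < 0 from ha) (Nat.not_lt_zero a), fun a ha b hb _ => ?_⟩,
      (hfmem i).1, (hfmem i).2⟩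
    have ha' : a ≤ 0 := ha
    have hb' : b ≤ 0 := hb
    omega
  · rw [Set.disjoint_left]
    rintro v ⟨a, _, rfl⟩ ⟨b, _, hb⟩
    exact hij (hfinj hb.symm)


theorem mengerCore [Finite V] :
    ∀ (N : ℕ) (R : V → V → Prop), (∀ v : V, ¬ R v v) →
      {e : V × V | R e.1 e.2}.ncard ≤ N →
      ∀ (A B : Set V) (k : ℕ), (∀ X : Set V, Sep R A B X → k ≤ X.ncard) →
      DisjPaths R A B k := by
  intro N
  induction N with
  | zero =>
    intro R hirr hN A B k hsep
    have hE : ∀ u v : V, ¬ R u v := by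
      intro u v huv
      have : 0 < {e : V × V | R e.1 e.2}.ncard :=
        (Set.ncard_pos (Set.toFinite _)).2 ⟨(u, v), huv⟩
      omega
    exact noedge_case hE hsep
  | succ N IH =>
    classical
    intro R hirr hN A B k hsep
    by_cases hEe : ∀ u v : V, ¬ R u v
    · exact noedge_case hEe hsep
    push_neg at hEe
    obtain ⟨x, y, hxy⟩ := hEe
    have hxyne : x ≠ y := fun h => hirr x (by rw [h] at hxy ⊢; exact hxy)
    set R' : V → V → Prop := fun u v => R u v ∧ ¬(u = x ∧ v = y) with hR'def
    have hR'sub : ∀ u v : V, R' u v → R u v := fun u v h => h.1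
    have hirr' : ∀ v : V, ¬ R' v v := fun v h => hirr v h.1
    have hlt : {e : V × V | R' e.1 e.2}.ncard < {e : V × V | R e.1 e.2}.ncard := by
      apply Set.ncard_lt_ncard _ (Set.toFinite _)
      rw [Set.ssubset_iff_subset_ne]
      constructor
      · rintro ⟨u, v⟩ h; exact h.1
      · intro hcontra
        have : ((x, y) : V × V) ∈ {e : V × V | R' e.1 e.2} := by rw [hcontra]; exact hxy
        exact this.2 ⟨rfl, rfl⟩
    have hN' : {e : V × V | R' e.1 e.2}.ncard ≤ N := by omega
    by_cases hcase : ∀ X : Set V, Sep R' A B X → k ≤ X.ncard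
    · exact disjPaths_mono hR'sub (IH R' hirr' hN' A B k hcase)
    push_neg at hcase
    obtain ⟨S, hSsep, hSlt⟩ := hcase
    have sep1 : Sep R A B (insert x S) := by
      intro w nn hw h0 hn
      by_cases huse : ∃ j, j < nn ∧ w j = x ∧ w (j + 1) = y
      · obtain ⟨j, hj, hjx, _⟩ := huse
        exact ⟨j, le_of_lt hj, by rw [hjx]; exact Set.mem_insert x S⟩
      · have hw' : IsWalkOn R' w nn := fun i hi =>
          ⟨hw i hi, fun hc => huse ⟨i, hi, hc.1, hc.2⟩⟩
        obtain ⟨i, hi, hiS⟩ := hSsep w nn hw' h0 hn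
        exact ⟨i, hi, Set.mem_insert_of_mem _ hiS⟩
    have sep2 : Sep R A B (insert y S) := by
      intro w nn hw h0 hn
      by_cases huse : ∃ j, j < nn ∧ w j = x ∧ w (j + 1) = y
      · obtain ⟨j, hj, _, hjy⟩ := huse
        exact ⟨j + 1, by omega, by rw [hjy]; exact Set.mem_insert y S⟩
      · have hw' : IsWalkOn R' w nn := fun i hi =>
          ⟨hw i hi, fun hc => huse ⟨i, hi, hc.1, hc.2⟩⟩
        obtain ⟨i, hi, hiS⟩ := hSsep w nn hw' h0 hn
        exact ⟨i, hi, Set.mem_insert_of_mem _ hiS⟩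
    have h1 := hsep _ sep1
    have h2 := hsep _ sep2
    have hSfin : S.Finite := Set.toFinite S
    have hxS : x ∉ S := by
      intro h
      rw [Set.insert_eq_self.2 h] at h1
      omega
    have hyS : y ∉ S := by
      intro h
      rw [Set.insert_eq_self.2 h] at h2
      omega
    have hXcard : (insert x S).ncard = k := by
      rw [Set.ncard_insert_of_notMem hxS hSfin]
      rw [Set.ncard_insert_of_notMem hxS hSfin] at h1
      omega
    have hYcard : (insert y S).ncard = k := by
      rw [Set.ncard_insert_of_notMem hyS hSfin]
      rw [Set.ncard_insert_of_notMem hyS hSfin] at h2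
      omega
    have hXY : ∀ v, v ∈ insert x S → v ∈ insert y S → v ∈ S := by
      intro v hvX hvY
      rcases hvX with rfl | h
      · rcases hvY with h' | h'
        · exact absurd h' hxyne
        · exact h'
      · exact h
    -- separation bound for (A, insert x S)
    have hsepAX : ∀ T : Set V, Sep R' A (insert x S) T → k ≤ T.ncard := by
      intro T hT
      have hAX : Sep R A (insert x S) T := by
        intro w nn hw h0 hn
        by_cases huse : ∃ j, j ≤ nn ∧ w j = x
        · obtain ⟨hj0n, hj0x⟩ := Nat.find_spec huse
          have hw' : IsWalkOn R' w (Nat.find huse) := by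
            intro i hi
            refine ⟨hw i (by omega), fun hc => ?_⟩
            exact Nat.find_min huse hi ⟨by omega, hc.1⟩
          obtain ⟨i, hi, hiT⟩ := hT w (Nat.find huse) hw' h0
            (by rw [hj0x]; exact Set.mem_insert x S)
          exact ⟨i, by omega, hiT⟩
        · push_neg at huse
          have hw' : IsWalkOn R' w nn := fun i hi =>
            ⟨hw i hi, fun hc => huse i (le_of_lt hi) hc.1⟩
          exact hT w nn hw' h0 hn
      apply hsep
      intro w nn hw h0 hn
      obtain ⟨i, hi, hiX⟩ := sep1 w nn hw h0 hn
      obtain ⟨i', hi', hiT⟩ := hAX w i (fun j hj => hw j (by omega)) h0 hiX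
      exact ⟨i', by omega, hiT⟩
    -- separation bound for (insert y S, B)
    have hsepYB : ∀ T : Set V, Sep R' (insert y S) B T → k ≤ T.ncard := by
      intro T hT
      have hYB : Sep R (insert y S) B T := by
        intro w nn hw h0 hn
        by_cases huse : ∃ j, j < nn ∧ w j = x ∧ w (j + 1) = y
        · have hyex : ∃ j, j ≤ nn ∧ w j = y := by
            obtain ⟨j, hj, _, hjy⟩ := huse
            exact ⟨j + 1, by omega, hjy⟩
          set j1 := Nat.findGreatest (fun j => w j = y) nn with hj1def
          have hspec : w j1 = y := by
            show w (Nat.findGreatest (fun j => w j = y) nn) = y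
            obtain ⟨j, hj, hjy⟩ := hyex
            exact Nat.findGreatest_spec (P := fun j => w j = y) (m := j) hj hjy
          have hj1n : j1 ≤ nn := Nat.findGreatest_le nn
          have hw' : IsWalkOn R' (fun i => w (j1 + i)) (nn - j1) := by
            intro i hi
            refine ⟨hw (j1 + i) (by omega), fun hc => ?_⟩
            have hle2 : j1 + i + 1 ≤ Nat.findGreatest (fun j => w j = y) nn :=
              Nat.le_findGreatest (P := fun j => w j = y) (by omega) hc.2
            have : j1 + i + 1 ≤ j1 := hle2
            omega
          obtain ⟨i, hi, hiT⟩ := hT _ (nn - j1) hw'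
            (by show w (j1 + 0) ∈ _; rw [Nat.add_zero, hspec]; exact Set.mem_insert y S)
            (by show w (j1 + (nn - j1)) ∈ B; rw [show j1 + (nn - j1) = nn by omega]; exact hn)
          exact ⟨j1 + i, by omega, hiT⟩
        · have hw' : IsWalkOn R' w nn := fun i hi =>
            ⟨hw i hi, fun hc => huse ⟨i, hi, hc.1, hc.2⟩⟩
          exact hT w nn hw' h0 hn
      apply hsep
      intro w nn hw h0 hn
      obtain ⟨i, hi, hiY⟩ := sep2 w nn hw h0 hn
      obtain ⟨i', hi', hiT⟩ := hYB (fun j => w (i + j)) (nn - i) (suffix_walk hw hi)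
        (by show w (i + 0) ∈ _; rwa [Nat.add_zero])
        (by show w (i + (nn - i)) ∈ B; rw [show i + (nn - i) = nn by omega]; exact hn)
      exact ⟨i + i', by omega, hiT⟩
    obtain ⟨P1, l1, hP1, hP1d⟩ := IH R' hirr' hN' A (insert x S) k hsepAX
    obtain ⟨Q1, m1, hQ1, hQ1d⟩ := IH R' hirr' hN' (insert y S) B k hsepYB
    -- truncate A-side paths at their first hit of insert x S
    have hexP : ∀ i : Fin k, ∃ c, c ≤ l1 i ∧ P1 i c ∈ insert x S :=
      fun i => ⟨l1 i, le_rfl, (hP1 i).2.2⟩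
    set n : Fin k → ℕ := fun i => Nat.find (hexP i) with hndef
    have hnspec : ∀ i, n i ≤ l1 i ∧ P1 i (n i) ∈ insert x S := fun i => Nat.find_spec (hexP i)
    have hnmin : ∀ i, ∀ j < n i, P1 i j ∉ insert x S := by
      intro i j hj hmem
      exact Nat.find_min (hexP i) hj ⟨by have := (hnspec i).1; omega, hmem⟩
    have hppath : ∀ i, IsPathOn R' (P1 i) (n i) := fun i => path_mono_len (hP1 i).1 (hnspec i).1
    have hpdisj : ∀ i j, i ≠ j → Disjoint (walkVerts (P1 i) (n i)) (walkVerts (P1 j) (n j)) :=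
      fun i j hij => Set.disjoint_of_subset (walkVerts_mono (hnspec i).1)
        (walkVerts_mono (hnspec j).1) (hP1d i j hij)
    -- truncate B-side paths from their last hit of insert y S
    set d : Fin k → ℕ := fun i => Nat.findGreatest (fun j => Q1 i j ∈ insert y S) (m1 i) with hddef
    have hdspec : ∀ i, Q1 i (d i) ∈ insert y S := by
      intro i
      show Q1 i (Nat.findGreatest (fun j => Q1 i j ∈ insert y S) (m1 i)) ∈ insert y S
      exact Nat.findGreatest_spec (P := fun j => Q1 i j ∈ insert y S) (Nat.zero_le _) (hQ1 i).2.1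
    have hdle : ∀ i, d i ≤ m1 i := fun i => Nat.findGreatest_le _
    set q : Fin k → ℕ → V := fun i j => Q1 i (d i + j) with hqdef
    set ml : Fin k → ℕ := fun i => m1 i - d i with hmldef
    have hqpath : ∀ i, IsPathOn R' (q i) (ml i) := fun i => suffix_path (hQ1 i).1 (hdle i)
    have hq0 : ∀ i, q i 0 ∈ insert y S := by
      intro i
      show Q1 i (d i + 0) ∈ _
      rw [Nat.add_zero]
      exact hdspec i
    have hqB : ∀ i, q i (ml i) ∈ B := by
      intro i
      show Q1 i (d i + (m1 i - d i)) ∈ B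
      rw [show d i + (m1 i - d i) = m1 i by have := hdle i; omega]
      exact (hQ1 i).2.2
    have hqY : ∀ i, ∀ j, 0 < j → j ≤ ml i → q i j ∉ insert y S := by
      intro i j hj0 hjle hmem
      have h' : d i + j ≤ Nat.findGreatest (fun j => Q1 i j ∈ insert y S) (m1 i) :=
        Nat.le_findGreatest (P := fun j => Q1 i j ∈ insert y S)
          (by have := hdle i; simp only [hmldef] at hjle; omega) hmem
      have : d i + j ≤ d i := h'
      omega
    have hqsub : ∀ i, walkVerts (q i) (ml i) ⊆ walkVerts (Q1 i) (m1 i) :=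
      fun i => suffix_verts (hdle i)
    have hqdisj : ∀ i j, i ≠ j → Disjoint (walkVerts (q i) (ml i)) (walkVerts (q j) (ml j)) :=
      fun i j hij => Set.disjoint_of_subset (hqsub i) (hqsub j) (hQ1d i j hij)
    -- endpoint enumerations
    set f : Fin k → V := fun i => P1 i (n i) with hfdef
    have hfX : ∀ i, f i ∈ insert x S := fun i => (hnspec i).2
    have hfinj : Function.Injective f := by
      intro i j hij
      by_contra hne
      have hd := Set.disjoint_left.1 (hpdisj i j hne)
      have hm1 : f i ∈ walkVerts (P1 i) (n i) := walkVerts_self le_rfl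
      have hm2 : f i ∈ walkVerts (P1 j) (n j) := by
        rw [hij]; exact walkVerts_self le_rfl
      exact hd hm1 hm2
    have hfsurj : ∀ v ∈ insert x S, ∃ i, f i = v :=
      surj_of_inj_ncard hfinj hfX (Set.toFinite _) hXcard
    set g : Fin k → V := fun i => q i 0 with hgdef
    have hgY : ∀ i, g i ∈ insert y S := hq0
    have hginj : Function.Injective g := by
      intro i j hij
      by_contra hne
      have hd := Set.disjoint_left.1 (hqdisj i j hne)
      have hm1 : g i ∈ walkVerts (q i) (ml i) := walkVerts_self (Nat.zero_le _)
      have hm2 : g i ∈ walkVerts (q j) (ml j) := by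
        rw [hij]; exact walkVerts_self (Nat.zero_le _)
      exact hd hm1 hm2
    have hgsurj : ∀ v ∈ insert y S, ∃ i, g i = v :=
      surj_of_inj_ncard hginj hgY (Set.toFinite _) hYcard
    -- the pairing
    set tg : Fin k → V := fun i => if f i = x then y else f i with htgdef
    have htgY : ∀ i, tg i ∈ insert y S := by
      intro i
      by_cases h : f i = x
      · simp only [htgdef, if_pos h]; exact Set.mem_insert y S
      · simp only [htgdef, if_neg h]
        rcases hfX i with h' | h'
        · exact absurd h' h
        · exact Set.mem_insert_of_mem _ h'
    have hjex : ∀ i, ∃ j, g j = tg i := fun i => hgsurj _ (htgY i)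
    choose pj hpj using hjex
    have htginj : Function.Injective tg := by
      intro i j hij
      apply hfinj
      by_cases hi : f i = x <;> by_cases hj' : f j = x <;>
        simp only [htgdef, if_pos, if_neg, hi, hj'] at hij
      · rw [hi, hj']
      · rcases hfX j with h' | h'
        · exact absurd h' hj'
        · exact absurd (hij ▸ h') hyS
      · rcases hfX i with h' | h'
        · exact absurd h' hi
        · exact absurd (hij ▸ h') hyS
      · exact hij
    have hpjinj : Function.Injective pj := by
      intro i j hij
      exact htginj (by rw [← hpj i, ← hpj j, hij])
    -- master intersection lemma, instantiated
    have hcross : ∀ i i' (v : V), v ∈ walkVerts (P1 i) (n i) → v ∈ walkVerts (q i') (ml i') →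
        v ∈ S ∧ v = f i ∧ v = g i' := by
      intro i i' v h1 h2
      obtain ⟨a, ha, hav⟩ := h1
      obtain ⟨b, hb, hbv⟩ := h2
      have heq : P1 i a = q i' b := by rw [hav, hbv]
      have hm := master hSsep (Set.subset_insert x S) (Set.subset_insert y S) hXY
        (hppath i).1 (hP1 i).2.1 (hnspec i).2 (hnmin i)
        (hqpath i').1 (hq0 i') (hqB i') (hqY i') ha hb heq
      refine ⟨hav ▸ hm.1, ?_, ?_⟩
      · rw [← hav, hm.2.1]
      · rw [← hbv, hm.2.2]
    obtain ⟨i0, hi0⟩ := hfsurj x (Set.mem_insert x S)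
    have hxq : ∀ i', x ∉ walkVerts (q i') (ml i') := by
      intro i' hmem
      have hx1 : x ∈ walkVerts (P1 i0) (n i0) := by
        rw [← hi0]; exact walkVerts_self le_rfl
      exact hxS (hcross i0 i' x hx1 hmem).1
    -- B-side extended walks
    set w2 : Fin k → ℕ → V := fun i => if f i = x then prep x (q (pj i)) else q (pj i) with hw2def
    set L2 : Fin k → ℕ := fun i => if f i = x then ml (pj i) + 1 else ml (pj i) with hL2def
    have hgy : ∀ i, f i = x → q (pj i) 0 = y := by
      intro i h
      have := hpj i
      simp only [htgdef, if_pos h] at this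
      exact this
    have hw2path : ∀ i, IsPathOn R (w2 i) (L2 i) := by
      intro i
      by_cases h : f i = x
      · simp only [hw2def, hL2def, if_pos h]
        refine prep_path (path_mono_rel hR'sub (hqpath (pj i))) ?_ (hxq (pj i))
        rw [hgy i h]
        exact hxy
      · simp only [hw2def, hL2def, if_neg h]
        exact path_mono_rel hR'sub (hqpath (pj i))
    have hw20 : ∀ i, w2 i 0 = f i := by
      intro i
      by_cases h : f i = x
      · simp only [hw2def, if_pos h]; rw [h]; rfl
      · simp only [hw2def, if_neg h]
        show g (pj i) = f i
        rw [hpj i]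
        simp only [htgdef, if_neg h]
    have hw2B : ∀ i, w2 i (L2 i) ∈ B := by
      intro i
      by_cases h : f i = x
      · simp only [hw2def, hL2def, if_pos h]
        exact hqB (pj i)
      · simp only [hw2def, hL2def, if_neg h]
        exact hqB (pj i)
    have hw2verts : ∀ i (v : V), v ∈ walkVerts (w2 i) (L2 i) →
        (v = x ∧ f i = x) ∨ v ∈ walkVerts (q (pj i)) (ml (pj i)) := by
      intro i v hv
      by_cases h : f i = x
      · simp only [hw2def, hL2def, if_pos h] at hv
        rw [prep_verts] at hv
        rcases hv with rfl | hv
        · exact Or.inl ⟨rfl, h⟩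
        · exact Or.inr hv
      · simp only [hw2def, hL2def, if_neg h] at hv
        exact Or.inr hv
    have hPw2 : ∀ i i' (v : V), v ∈ walkVerts (P1 i) (n i) → v ∈ walkVerts (w2 i') (L2 i') →
        (i = i' ∧ v = f i) ∨ (v ∈ S ∧ v = f i ∧ v = g (pj i')) := by
      intro i i' v h1 h2
      rcases hw2verts i' v h2 with ⟨hvx, hfi'⟩ | h2'
      · obtain ⟨a, ha, hav⟩ := h1
        have haX : P1 i a ∈ insert x S := by rw [hav, hvx]; exact Set.mem_insert x S
        have han : a = n i := by
          by_contra hne2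
          exact hnmin i a (lt_of_le_of_ne ha hne2) haX
        have hvfi : v = f i := by rw [← hav, han]
        exact Or.inl ⟨hfinj (by rw [hfi', ← hvx, hvfi]), hvfi⟩
      · exact Or.inr (hcross i (pj i') v h1 h2')
    refine ⟨fun i => catW (P1 i) (n i) (w2 i), fun i => n i + L2 i, ?_, ?_⟩
    · intro i
      have hj : P1 i (n i) = w2 i 0 := (hw20 i).symm
      refine ⟨?_, ?_, ?_⟩
      · apply catW_path (path_mono_rel hR'sub (hppath i)) (hw2path i) hj
        intro v hv1 hv2
        rcases hPw2 i i v hv1 hv2 with ⟨_, hvf⟩ | ⟨_, hvf, _⟩ <;> exact hvf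
      · show catW (P1 i) (n i) (w2 i) 0 ∈ A
        rw [catW_left (Nat.zero_le _)]; exact (hP1 i).2.1
      · show catW (P1 i) (n i) (w2 i) (n i + L2 i) ∈ B
        rw [catW_right hj]; exact hw2B i
    · intro i i' hne
      rw [Set.disjoint_left]
      intro v hv1 hv2
      have hv1b : v ∈ walkVerts (catW (P1 i) (n i) (w2 i)) (n i + L2 i) := hv1
      have hv2b : v ∈ walkVerts (catW (P1 i') (n i') (w2 i')) (n i' + L2 i') := hv2
      rw [catW_verts (hw20 i).symm] at hv1b
      rw [catW_verts (hw20 i').symm] at hv2b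
      clear hv1 hv2
      rcases hv1b with hv1 | hv1 <;> rcases hv2b with hv2 | hv2
      · exact Set.disjoint_left.1 (hpdisj i i' hne) hv1 hv2
      · rcases hPw2 i i' v hv1 hv2 with ⟨h, _⟩ | ⟨hvS, hvf, hvg⟩
        · exact hne h
        · have htgS : tg i' ∈ S := by rw [← hpj i', ← hvg]; exact hvS
          by_cases h : f i' = x
          · rw [htgdef] at htgS
            simp only [if_pos h] at htgS
            exact hyS htgS
          · have : f i = f i' := by
              rw [htgdef] at htgS
              simp only [if_neg h] at htgS
              have : tg i' = f i' := by simp only [htgdef, if_neg h]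
              rw [← hvf, hvg, hpj i', this]
            exact hne (hfinj this)
      · rcases hPw2 i' i v hv2 hv1 with ⟨h, _⟩ | ⟨hvS, hvf, hvg⟩
        · exact hne h.symm
        · have htgS : tg i ∈ S := by rw [← hpj i, ← hvg]; exact hvS
          by_cases h : f i = x
          · rw [htgdef] at htgS
            simp only [if_pos h] at htgS
            exact hyS htgS
          · have : f i' = f i := by
              rw [htgdef] at htgS
              simp only [if_neg h] at htgS
              have : tg i = f i := by simp only [htgdef, if_neg h]
              rw [← hvf, hvg, hpj i, this]
            exact hne (hfinj this.symm)
      · rcases hw2verts i v hv1 with ⟨hvx, hfi⟩ | hv1' <;>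
          rcases hw2verts i' v hv2 with ⟨hvx', hfi'⟩ | hv2'
        · exact hne (hfinj (by rw [hfi, hfi']))
        · exact hxq _ (hvx ▸ hv2')
        · exact hxq _ (hvx' ▸ hv1')
        · exact Set.disjoint_left.1 (hqdisj _ _ (fun h => hne (hpjinj h))) hv1' hv2'

end MAux

/-- From a (1/t)-integral linkage of order m·t from A to B one can
extract m pairwise vertex-disjoint (A,B)-paths inside the union of the family. -/
theorem fractional_linkage_to_integral (R : V → V → Prop) (t m : ℕ)
    (ht : 0 < t) (hm : 0 < m) (A B : Set V)
    (P : Fin (m * t) → ℕ → V) (len : Fin (m * t) → ℕ)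
    (hpath : ∀ i, IsPathOn R (P i) (len i) ∧ P i 0 ∈ A ∧ P i (len i) ∈ B)
    (hfrac : ∀ v : V, {i | v ∈ walkVerts (P i) (len i)}.ncard ≤ t) :
    ∃ (Q : Fin m → ℕ → V) (lq : Fin m → ℕ),
      (∀ j, IsPathOn R (Q j) (lq j) ∧ Q j 0 ∈ A ∧ Q j (lq j) ∈ B) ∧
      (∀ j j', j ≠ j' → Disjoint (walkVerts (Q j) (lq j)) (walkVerts (Q j') (lq j'))) ∧
      (∀ j, walkVerts (Q j) (lq j) ⊆ ⋃ i, walkVerts (P i) (len i)) ∧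
      (∀ j, walkEdges (Q j) (lq j) ⊆ ⋃ i, walkEdges (P i) (len i)) := by
  classical
  set W : Set V := ⋃ i, walkVerts (P i) (len i) with hWdef
  have hWfin : W.Finite := Set.finite_iUnion (fun i => MAux.walkVerts_finite _ _)
  haveI : Finite ↥W := hWfin.to_subtype
  set R' : ↥W → ↥W → Prop := fun u v => ∃ i, ((u : V), (v : V)) ∈ walkEdges (P i) (len i)
    with hR'def
  have hR'R : ∀ u v : ↥W, R' u v → R (u : V) (v : V) := by
    rintro u v ⟨i, a, ha, h1, h2⟩
    have := (hpath i).1.1 a ha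
    rw [h1, h2] at this
    exact this
  have hirr : ∀ v : ↥W, ¬ R' v v := by
    rintro v ⟨i, a, ha, h1, h2⟩
    have : a = a + 1 := (hpath i).1.2 a (by omega) (a + 1) (by omega) (by rw [h1, h2])
    omega
  set A' : Set ↥W := {v : ↥W | (v : V) ∈ A} with hA'def
  set B' : Set ↥W := {v : ↥W | (v : V) ∈ B} with hB'def
  -- each original path lifts to an R'-walk in W
  have hmemW : ∀ (i : Fin (m * t)) (a : ℕ), P i (min a (len i)) ∈ W :=
    fun i a => Set.mem_iUnion.2 ⟨i, min a (len i), min_le_right _ _, rfl⟩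
  have hsep : ∀ X : Set ↥W, MAux.Sep R' A' B' X → m ≤ X.ncard := by
    intro X hX
    have hhit : ∀ i : Fin (m * t), ∃ v : ↥W, v ∈ X ∧ (v : V) ∈ walkVerts (P i) (len i) := by
      intro i
      set wp : ℕ → ↥W := fun a => ⟨P i (min a (len i)), hmemW i a⟩ with hwpdef
      have hwalk : IsWalkOn R' wp (len i) := by
        intro a ha
        refine ⟨i, a, ha, ?_, ?_⟩
        · show P i a = P i (min a (len i))
          rw [min_eq_left (by omega)]
        · show P i (a + 1) = P i (min (a + 1) (len i))
          rw [min_eq_left (by omega)]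
      have h0 : wp 0 ∈ A' := by
        show P i (min 0 (len i)) ∈ A
        rw [min_eq_left (by omega)]
        exact (hpath i).2.1
      have hn : wp (len i) ∈ B' := by
        show P i (min (len i) (len i)) ∈ B
        rw [min_self]
        exact (hpath i).2.2
      obtain ⟨a, ha, haX⟩ := hX wp (len i) hwalk h0 hn
      refine ⟨wp a, haX, ?_⟩
      show P i (min a (len i)) ∈ walkVerts (P i) (len i)
      exact ⟨min a (len i), min_le_right _ _, rfl⟩
    choose F hF1 hF2 using hhit
    haveI : Fintype ↥W := Fintype.ofFinite _
    have hfib : ∀ v : ↥W, (Finset.univ.filter (fun i => F i = v)).card ≤ t := by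
      intro v
      have hsub : {i : Fin (m * t) | F i = v} ⊆ {i | (v : V) ∈ walkVerts (P i) (len i)} := by
        intro i hi
        rw [← hi]
        exact hF2 i
      have := Set.ncard_le_ncard hsub (Set.toFinite _)
      have h2 := hfrac (v : V)
      have h3 : (Finset.univ.filter (fun i => F i = v)).card
          = {i : Fin (m * t) | F i = v}.ncard := by
        rw [Set.ncard_eq_toFinset_card']
        congr 1
        ext i
        simp
      omega
    set Xf : Finset ↥W := X.toFinset with hXfdef
    have hcount : (Finset.univ : Finset (Fin (m * t))).card
        ≤ ∑ v ∈ Xf, (Finset.univ.filter (fun i => F i = v)).card := by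
      rw [Finset.card_eq_sum_card_fiberwise (f := F) (fun i _ =>
        Set.mem_toFinset.2 (hF1 i))]
    have hsum : ∑ v ∈ Xf, (Finset.univ.filter (fun i => F i = v)).card ≤ Xf.card * t := by
      calc ∑ v ∈ Xf, (Finset.univ.filter (fun i => F i = v)).card
          ≤ ∑ _v ∈ Xf, t := Finset.sum_le_sum (fun v _ => hfib v)
        _ = Xf.card * t := by rw [Finset.sum_const, smul_eq_mul]
    have hXcard : X.ncard = Xf.card := by rw [Set.ncard_eq_toFinset_card']
    have hmt : m * t ≤ Xf.card * t := by
      have : (Finset.univ : Finset (Fin (m * t))).card = m * t := by simp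
      omega
    have := Nat.le_of_mul_le_mul_right hmt ht
    omega
  obtain ⟨Q', lq, hQ', hQ'd⟩ := MAux.mengerCore {e : ↥W × ↥W | R' e.1 e.2}.ncard R' hirr
    le_rfl A' B' m hsep
  refine ⟨fun j a => (Q' j a : V), lq, ?_, ?_, ?_, ?_⟩
  · intro j
    refine ⟨⟨?_, ?_⟩, (hQ' j).2.1, (hQ' j).2.2⟩
    · intro a ha
      exact hR'R _ _ ((hQ' j).1.1 a ha)
    · intro a ha b hb he
      exact (hQ' j).1.2 a ha b hb (Subtype.val_injective he)
  · intro j j' hne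
    rw [Set.disjoint_left]
    rintro v ⟨a, ha, hav⟩ ⟨b, hb, hbv⟩
    have hav' : (Q' j a : V) = v := hav
    have hbv' : (Q' j' b : V) = v := hbv
    have : Q' j a = Q' j' b := Subtype.val_injective (by rw [hav', hbv'])
    exact Set.disjoint_left.1 (hQ'd j j' hne)
      (MAux.walkVerts_self ha) (this ▸ MAux.walkVerts_self hb)
  · intro j
    rintro v ⟨a, ha, hav⟩
    have hav' : (Q' j a : V) = v := hav
    rw [← hav']
    exact (Q' j a).2
  · intro j
    rintro ⟨u, v⟩ ⟨a, ha, h1, h2⟩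
    have h1' : (Q' j a : V) = u := h1
    have h2' : (Q' j (a + 1) : V) = v := h2
    obtain ⟨i, hi⟩ := (hQ' j).1.1 a ha
    refine Set.mem_iUnion.2 ⟨i, ?_⟩
    rw [← h1', ← h2']
    exact hi
end

section
/- Menger's theorem for digraphs: for vertex sets A and B in a digraph G and a positive integer k, either G contains k pairwise vertex-disjoint directed paths from A to B, or there is a set S of fewer than k vertices such that every directed path from A to B meets S. -/
variable {V : Type}

/-!
Induction on the number of edges. Let `xy` be an edge and `G'` the digraph without it. If every
`A`–`B` separator of `G'` has at least `k` vertices, induction applies to `G'`. Otherwise `G'` has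
an `A`–`B` separator `Y` with `|Y| < k`; then `Y ∪ {x}` and `Y ∪ {y}` separate `A` from `B` in `G`,
so `x, y ∉ Y` and `|Y| = k - 1`. Every `A`–`(Y ∪ {x})` or `(Y ∪ {y})`–`B` separator of `G'` is an
`A`–`B` separator of `G`, so induction gives `k` disjoint paths from `A` to `Y ∪ {x}` and `k`
disjoint paths from `Y ∪ {y}` to `B` in `G'`, which we shorten to meet `Y ∪ {x}` only at their
end and `Y ∪ {y}` only at their start. Since `Y` separates `A` from `B` in `G'`, a path of the
first family can then meet one of the second only in a common endpoint in `Y`; matching endpoints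
(with `x` matched to `y` through the edge `xy`) glues the two families into `k` disjoint
`A`–`B` paths.
-/

open Function

section Walks

variable {R R' : V → V → Prop} {w p q : ℕ → V} {m n : ℕ} {x : V}

theorem mem_walkVerts {i : ℕ} (h : i ≤ n) : w i ∈ walkVerts w n := ⟨i, h, rfl⟩

theorem walkVerts_mono (h : m ≤ n) : walkVerts w m ⊆ walkVerts w n := by
  rintro _ ⟨i, hi, rfl⟩
  exact mem_walkVerts (hi.trans h)

theorem walkVerts_drop_subset (h : m ≤ n) :
    walkVerts (fun t => w (t + m)) (n - m) ⊆ walkVerts w n := by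
  rintro _ ⟨i, hi, rfl⟩
  exact mem_walkVerts (by omega)

theorem IsWalkOn.mono (hR : ∀ u v, R u v → R' u v) (hw : IsWalkOn R w n) : IsWalkOn R' w n :=
  fun i hi => hR _ _ (hw i hi)

theorem IsWalkOn.take (hw : IsWalkOn R w n) (h : m ≤ n) : IsWalkOn R w m :=
  fun i hi => hw i (by omega)

theorem IsWalkOn.drop (hw : IsWalkOn R w n) (m : ℕ) :
    IsWalkOn R (fun t => w (t + m)) (n - m) := by
  intro i hi
  simpa only [Nat.add_right_comm i 1 m] using hw (i + m) (by omega)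

theorem IsWalkOn.last_eq_first (hR : ∀ u v, R u v → u = v) (hw : IsWalkOn R w n) :
    w n = w 0 := by
  induction n with
  | zero => rfl
  | succ n ih => rw [← hR _ _ (hw n n.lt_succ_self), ih (hw.take n.le_succ)]

def walkAppend (p : ℕ → V) (m : ℕ) (q : ℕ → V) : ℕ → V :=
  fun t => if t ≤ m then p t else q (t - m)

theorem walkAppend_zero : walkAppend p m q 0 = p 0 := if_pos m.zero_le

theorem walkAppend_last (hpq : q 0 = p m) : walkAppend p m q (m + n) = q n := by
  unfold walkAppend
  split_ifs with h
  · obtain rfl : n = 0 := by omega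
    simpa using hpq.symm
  · simp

theorem IsWalkOn.append (hp : IsWalkOn R p m) (hq : IsWalkOn R q n) (hpq : q 0 = p m) :
    IsWalkOn R (walkAppend p m q) (m + n) := by
  intro t ht
  unfold walkAppend
  rcases lt_trichotomy t m with h | rfl | h
  · rw [if_pos h.le, if_pos (show t + 1 ≤ m from h)]
    exact hp t h
  · rw [if_pos le_rfl, if_neg (by omega), ← hpq, show t + 1 - t = 0 + 1 by omega]
    exact hq 0 (by omega)
  · rw [if_neg (by omega), if_neg (by omega), show t + 1 - m = t - m + 1 by omega]
    exact hq _ (by omega)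

theorem walkVerts_walkAppend_subset :
    walkVerts (walkAppend p m q) (m + n) ⊆ walkVerts p m ∪ walkVerts q n := by
  rintro _ ⟨t, ht, rfl⟩
  unfold walkAppend
  split_ifs with h
  · exact Or.inl (mem_walkVerts h)
  · exact Or.inr (mem_walkVerts (by omega))

def walkCons (x : V) (q : ℕ → V) : ℕ → V :=
  fun t => if t = 0 then x else q (t - 1)

theorem IsWalkOn.cons (hx : R x (q 0)) (hq : IsWalkOn R q n) :
    IsWalkOn R (walkCons x q) (n + 1) := by
  rintro (_ | t) ht
  · exact hx
  · exact hq t (by omega)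

theorem walkVerts_walkCons_subset :
    walkVerts (walkCons x q) (n + 1) ⊆ insert x (walkVerts q n) := by
  rintro _ ⟨_ | t, ht, rfl⟩
  · exact Or.inl rfl
  · exact Or.inr (mem_walkVerts (by omega))

theorem exists_walk_of_eq_or_adj (hp : IsWalkOn R p m) (hq : IsWalkOn R q n)
    (hpq : q 0 = p m ∨ R (p m) (q 0)) :
    ∃ w l, IsWalkOn R w l ∧ w 0 = p 0 ∧ w l = q n ∧
      walkVerts w l ⊆ walkVerts p m ∪ walkVerts q n := by
  rcases hpq with hpq | hpq
  · exact ⟨_, _, hp.append hq hpq, walkAppend_zero, walkAppend_last hpq,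
      walkVerts_walkAppend_subset⟩
  · refine ⟨_, _, hp.append (hq.cons hpq) rfl, walkAppend_zero, walkAppend_last rfl, ?_⟩
    refine walkVerts_walkAppend_subset.trans (Set.union_subset Set.subset_union_left ?_)
    refine walkVerts_walkCons_subset.trans (Set.insert_subset ?_ Set.subset_union_right)
    exact Or.inl (mem_walkVerts le_rfl)

end Walks

section Paths

variable {R : V → V → Prop} {A B : Set V} {w : ℕ → V} {n : ℕ}

structure IsPathFromTo (R : V → V → Prop) (A B : Set V) (w : ℕ → V) (n : ℕ) : Prop where
  isPathOn : IsPathOn R w n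
  start_mem : w 0 ∈ A
  end_mem : w n ∈ B
  not_mem_left : ∀ t, 0 < t → t ≤ n → w t ∉ A
  not_mem_right : ∀ t < n, w t ∉ B

theorem IsWalkOn.exists_isPathFromTo (hw : IsWalkOn R w n) (hA : w 0 ∈ A) (hB : w n ∈ B) :
    ∃ p m, IsPathFromTo R A B p m ∧ walkVerts p m ⊆ walkVerts w n := by
  induction n using Nat.strong_induction_on generalizing w with
  | _ n ih =>
  by_cases hrep : ∃ i j, i < j ∧ j ≤ n ∧ w i = w j
  · obtain ⟨i, j, hij, hjn, hwij⟩ := hrep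
    have hjoin : (fun t => w (t + j)) 0 = w i := by simp [hwij]
    obtain ⟨p, l, hp, hsub⟩ := ih (i + (n - j)) (by omega)
      ((hw.take (hij.le.trans hjn)).append (hw.drop j) hjoin) (by rwa [walkAppend_zero])
      (by rwa [walkAppend_last hjoin, Nat.sub_add_cancel hjn])
    refine ⟨p, l, hp, hsub.trans (walkVerts_walkAppend_subset.trans ?_)⟩
    exact Set.union_subset (walkVerts_mono (by omega)) (walkVerts_drop_subset hjn)
  by_cases hlateA : ∃ t, 0 < t ∧ t ≤ n ∧ w t ∈ A
  · obtain ⟨t, ht, htn, htA⟩ := hlateA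
    obtain ⟨p, l, hp, hsub⟩ := ih (n - t) (by omega) (hw.drop t) (by simpa using htA)
      (by simpa [Nat.sub_add_cancel htn] using hB)
    exact ⟨p, l, hp, hsub.trans (walkVerts_drop_subset htn)⟩
  by_cases hearlyB : ∃ t < n, w t ∈ B
  · obtain ⟨t, htn, htB⟩ := hearlyB
    obtain ⟨p, l, hp, hsub⟩ := ih t htn (hw.take htn.le) hA htB
    exact ⟨p, l, hp, hsub.trans (walkVerts_mono htn.le)⟩
  push Not at hrep hlateA hearlyB
  refine ⟨w, n, ⟨⟨hw, fun i hi j hj hij => ?_⟩, hA, hB, hlateA, hearlyB⟩, subset_rfl⟩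
  rcases lt_trichotomy i j with h | h | h
  · exact absurd hij (hrep i j h hj)
  · exact h
  · exact absurd hij.symm (hrep j i h hi)

end Paths

section Separators

variable {R : V → V → Prop} {A B Y : Set V} {p q : ℕ → V} {m n : ℕ}

def Separates (R : V → V → Prop) (A B S : Set V) : Prop :=
  ∀ w n, IsWalkOn R w n → w 0 ∈ A → w n ∈ B → ∃ i ≤ n, w i ∈ S

theorem separates_left_self : Separates R A B A :=
  fun _ n _ hA _ => ⟨0, n.zero_le, hA⟩

theorem separates_right_self : Separates R A B B :=
  fun _ n _ _ hB => ⟨n, le_rfl, hB⟩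

theorem separates_inter_of_loopless (hR : ∀ u v, R u v → u = v) : Separates R A B (A ∩ B) :=
  fun _ n hw hA hB => ⟨0, n.zero_le, hA, hw.last_eq_first hR ▸ hB⟩

theorem Separates.eq_of_mem_walkVerts (hY : Separates R A B Y)
    (hp : IsWalkOn R p m) (hpA : p 0 ∈ A) (hpY : ∀ t < m, p t ∉ Y)
    (hq : IsWalkOn R q n) (hqB : q n ∈ B) (hqY : ∀ t, 0 < t → t ≤ n → q t ∉ Y)
    {v : V} (hvp : v ∈ walkVerts p m) (hvq : v ∈ walkVerts q n) :
    v = p m ∧ v = q 0 ∧ v ∈ Y := by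
  obtain ⟨s, hs, rfl⟩ := hvp
  obtain ⟨t, ht, hts⟩ := hvq
  -- `p` up to `v`, then `q` from `v`, is an `A`–`B` walk, so it meets `Y`.
  have hjoin : (fun r => q (r + t)) 0 = p s := by simpa using hts
  obtain ⟨r, hr, hrY⟩ := hY _ _ ((hp.take hs).append (hq.drop t) hjoin)
    (by rwa [walkAppend_zero]) (by rwa [walkAppend_last hjoin, Nat.sub_add_cancel ht])
  unfold walkAppend at hrY
  split_ifs at hrY with hrs
  · obtain rfl : r = m := by
      by_contra
      exact hpY r (by omega) hrY
    obtain rfl : s = r := by omega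
    obtain rfl : t = 0 := by
      by_contra
      exact hqY t (by omega) ht (hts ▸ hrY)
    exact ⟨rfl, hts.symm, hrY⟩
  · exact absurd hrY (hqY _ (by omega) (by omega))

end Separators

section Linkages

variable {R R' : V → V → Prop} {A B : Set V} {ι κ : Type*} {P : ι → ℕ → V} {len : ι → ℕ}

structure IsLinkage (R : V → V → Prop) (A B : Set V) (P : ι → ℕ → V) (len : ι → ℕ) : Prop where
  walk : ∀ i, IsWalkOn R (P i) (len i)
  start_mem : ∀ i, P i 0 ∈ A
  end_mem : ∀ i, P i (len i) ∈ B
  disjoint : Pairwise fun i j => Disjoint (walkVerts (P i) (len i)) (walkVerts (P j) (len j))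

theorem IsLinkage.mono (hR : ∀ u v, R u v → R' u v) (h : IsLinkage R A B P len) :
    IsLinkage R' A B P len :=
  ⟨fun i => (h.walk i).mono hR, h.start_mem, h.end_mem, h.disjoint⟩

theorem IsLinkage.injective {f : ι → ℕ} (h : IsLinkage R A B P len) (hf : ∀ i, f i ≤ len i) :
    Injective fun i => P i (f i) := by
  intro i j (hij : P i (f i) = P j (f j))
  by_contra hne
  exact Set.disjoint_left.mp (h.disjoint hne) (mem_walkVerts (hf i))
    (hij ▸ mem_walkVerts (hf j))

theorem IsLinkage.range_start (h : IsLinkage R A B P len) (hA : A.ncard ≤ Nat.card ι)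
    (hAfin : A.Finite) : Set.range (fun i => P i 0) = A := by
  refine Set.eq_of_subset_of_ncard_le (Set.range_subset_iff.mpr h.start_mem) ?_ hAfin
  rwa [Set.ncard_range_of_injective (h.injective fun _ => (len _).zero_le)]

theorem IsLinkage.exists_isPathFromTo (h : IsLinkage R A B P len) :
    ∃ (P' : ι → ℕ → V) (len' : ι → ℕ), IsLinkage R A B P' len' ∧
      ∀ i, IsPathFromTo R A B (P' i) (len' i) := by
  choose P' len' hP' hsub using
    fun i => (h.walk i).exists_isPathFromTo (h.start_mem i) (h.end_mem i)
  exact ⟨P', len', ⟨fun i => (hP' i).isPathOn.1, fun i => (hP' i).start_mem,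
    fun i => (hP' i).end_mem, fun i j hij => (h.disjoint hij).mono (hsub i) (hsub j)⟩, hP'⟩

theorem exists_isLinkage_of_le_ncard_inter [Finite V] {k : ℕ} (hk : k ≤ (A ∩ B).ncard) :
    ∃ (P : Fin k → ℕ → V) (len : Fin k → ℕ), IsLinkage R A B P len := by
  obtain ⟨S, hSAB, hSk⟩ := Set.exists_subset_card_eq hk
  let e : Fin k ≃ S := (Finite.equivFinOfCardEq (by rw [Nat.card_coe_set_eq, hSk])).symm
  refine ⟨fun i _ => e i, fun _ => 0, ⟨fun _ _ h => absurd h (Nat.not_lt_zero _),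
    fun i => (hSAB (e i).2).1, fun i => (hSAB (e i).2).2, fun i j hij => ?_⟩⟩
  refine Set.disjoint_left.mpr ?_
  rintro _ ⟨_, -, rfl⟩ ⟨_, -, h⟩
  exact hij (e.injective (Subtype.ext h.symm))

theorem exists_isLinkage_of_glue {P : ι → ℕ → V} {m : ι → ℕ} {Q : κ → ℕ → V} {n : κ → ℕ}
    (hP : Pairwise fun i j => Disjoint (walkVerts (P i) (m i)) (walkVerts (P j) (m j)))
    (hQ : Pairwise fun i j => Disjoint (walkVerts (Q i) (n i)) (walkVerts (Q j) (n j)))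
    {σ : ι → κ} (hσ : Injective σ)
    (hPQ : ∀ i j, ¬Disjoint (walkVerts (P i) (m i)) (walkVerts (Q j) (n j)) → σ i = j)
    (hglue : ∀ i, ∃ w l, IsWalkOn R w l ∧ w 0 ∈ A ∧ w l ∈ B ∧
      walkVerts w l ⊆ walkVerts (P i) (m i) ∪ walkVerts (Q (σ i)) (n (σ i))) :
    ∃ (W : ι → ℕ → V) (len : ι → ℕ), IsLinkage R A B W len := by
  choose W len hW hA hB hsub using hglue
  refine ⟨W, len, ⟨hW, hA, hB, fun i j hij => (Disjoint.mono (hsub i) (hsub j) ?_)⟩⟩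
  rw [Set.disjoint_union_left, Set.disjoint_union_right, Set.disjoint_union_right]
  refine ⟨⟨hP hij, ?_⟩, ?_, hQ (hσ.ne hij)⟩
  · by_contra h
    exact hij (hσ (hPQ i (σ j) h))
  · by_contra h
    exact hij (hσ (hPQ j (σ i) fun h' => h h'.symm)).symm

end Linkages

section DeleteEdge

variable {R : V → V → Prop} {A B Y Z : Set V} {w : ℕ → V} {n : ℕ} {x y : V}

def deleteEdge (R : V → V → Prop) (x y : V) : V → V → Prop :=
  fun u v => R u v ∧ ¬(u = x ∧ v = y)

def properEdges (R : V → V → Prop) : Set (V × V) :=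
  {e | R e.1 e.2 ∧ e.1 ≠ e.2}

theorem ncard_properEdges_deleteEdge_lt [Finite V] (hxy : R x y) (hne : x ≠ y) :
    (properEdges (deleteEdge R x y)).ncard < (properEdges R).ncard :=
  Set.ncard_lt_ncard ⟨fun _ he => ⟨he.1.1, he.2⟩,
    fun h => (h (show (x, y) ∈ properEdges R from ⟨hxy, hne⟩)).1.2 ⟨rfl, rfl⟩⟩

theorem IsWalkOn.exists_prefix_deleteEdge (hY : Separates (deleteEdge R x y) A B Y)
    (hw : IsWalkOn R w n) (hA : w 0 ∈ A) (hB : w n ∈ B) :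
    ∃ j ≤ n, w j ∈ insert x Y ∧ IsWalkOn (deleteEdge R x y) w j := by
  classical
  by_cases hw' : IsWalkOn (deleteEdge R x y) w n
  · obtain ⟨j, hj, hjY⟩ := hY w n hw' hA hB
    exact ⟨j, hj, Or.inr hjY, hw'.take hj⟩
  let bad i := i < n ∧ ¬deleteEdge R x y (w i) (w (i + 1))
  have hex : ∃ i, bad i := by simpa [IsWalkOn] using hw'
  obtain ⟨hi, hbad⟩ := Nat.find_spec hex
  refine ⟨Nat.find hex, hi.le, Or.inl ?_, fun t ht => ?_⟩
  · by_contra hx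
    exact hbad ⟨hw _ hi, fun h => hx h.1⟩
  · by_contra h
    exact Nat.find_min hex ht ⟨by omega, h⟩

theorem IsWalkOn.exists_suffix_deleteEdge (hY : Separates (deleteEdge R x y) A B Y)
    (hw : IsWalkOn R w n) (hA : w 0 ∈ A) (hB : w n ∈ B) :
    ∃ j ≤ n, w j ∈ insert y Y ∧ IsWalkOn (deleteEdge R x y) (fun t => w (t + j)) (n - j) := by
  classical
  by_cases hw' : IsWalkOn (deleteEdge R x y) w n
  · obtain ⟨j, hj, hjY⟩ := hY w n hw' hA hB
    exact ⟨j, hj, Or.inr hjY, hw'.drop j⟩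
  let bad i := i < n ∧ ¬deleteEdge R x y (w i) (w (i + 1))
  obtain ⟨i, hi⟩ : ∃ i, bad i := by simpa [IsWalkOn] using hw'
  obtain ⟨hg, hbad⟩ := Nat.findGreatest_spec (P := bad) hi.1.le hi
  set g := Nat.findGreatest bad n
  refine ⟨g + 1, hg, Or.inl ?_, fun t ht => ?_⟩
  · by_contra hy
    exact hbad ⟨hw _ hg, fun h => hy h.2⟩
  · by_contra h
    refine Nat.findGreatest_is_greatest (show g < t + (g + 1) by omega) (by omega)
      ⟨by omega, ?_⟩
    simpa only [Nat.add_right_comm t 1] using h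

theorem Separates.of_deleteEdge_left (hY : Separates (deleteEdge R x y) A B Y)
    (hZ : Separates (deleteEdge R x y) A (insert x Y) Z) : Separates R A B Z := by
  intro w n hw hA hB
  obtain ⟨j, hj, hjT, hwj⟩ := hw.exists_prefix_deleteEdge hY hA hB
  obtain ⟨i, hi, hiZ⟩ := hZ w j hwj hA hjT
  exact ⟨i, hi.trans hj, hiZ⟩

theorem Separates.of_deleteEdge_right (hY : Separates (deleteEdge R x y) A B Y)
    (hZ : Separates (deleteEdge R x y) (insert y Y) B Z) : Separates R A B Z := by
  intro w n hw hA hB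
  obtain ⟨j, hj, hjT, hwj⟩ := hw.exists_suffix_deleteEdge hY hA hB
  obtain ⟨i, hi, hiZ⟩ := hZ _ _ hwj (by simpa using hjT)
    (by simpa [Nat.sub_add_cancel hj] using hB)
  exact ⟨i + j, by omega, hiZ⟩

end DeleteEdge

section Menger

variable {R : V → V → Prop} {A B Y : Set V} {x y v : V} {k : ℕ}

theorem swap_apply_of_mem [DecidableEq V] (hxY : x ∉ Y) (hyY : y ∉ Y) (hv : v ∈ Y) :
    Equiv.swap x y v = v :=
  Equiv.swap_apply_of_ne_of_ne (ne_of_mem_of_not_mem hv hxY) (ne_of_mem_of_not_mem hv hyY)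

theorem IsLinkage.exists_start_eq_swap [Finite V] [DecidableEq V] {Q : Fin k → ℕ → V}
    {n : Fin k → ℕ} (hQ : IsLinkage R (insert y Y) B Q n) (hk : (insert y Y).ncard ≤ k)
    (hxY : x ∉ Y) (hyY : y ∉ Y) (hv : v ∈ insert x Y) : ∃ j, Q j 0 = Equiv.swap x y v := by
  have hmem : Equiv.swap x y v ∈ insert y Y := by
    rcases hv with rfl | hv
    · rw [Equiv.swap_apply_left]
      exact Set.mem_insert _ _
    · rw [swap_apply_of_mem hxY hyY hv]
      exact Set.mem_insert_of_mem _ hv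
  rw [← hQ.range_start (by simpa using hk) (Set.toFinite _)] at hmem
  exact hmem

theorem exists_isLinkage_of_deleteEdge [Finite V] (hxy : R x y) (hxY : x ∉ Y) (hyY : y ∉ Y)
    (hk : (insert y Y).ncard ≤ k) (hY : Separates (deleteEdge R x y) A B Y)
    {P Q : Fin k → ℕ → V} {m n : Fin k → ℕ}
    (hP : IsLinkage (deleteEdge R x y) A (insert x Y) P m)
    (hQ : IsLinkage (deleteEdge R x y) (insert y Y) B Q n) :
    ∃ (W : Fin k → ℕ → V) (len : Fin k → ℕ), IsLinkage R A B W len := by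
  classical
  obtain ⟨P, m, hP, hP'⟩ := hP.exists_isPathFromTo
  obtain ⟨Q, n, hQ, hQ'⟩ := hQ.exists_isPathFromTo
  -- The path ending at `v` is continued by the path starting at `swap x y v`: at `v` itself
  -- if `v ∈ Y`, through the edge `xy` if `v = x`.
  choose σ hσ using fun i => hQ.exists_start_eq_swap hk hxY hyY (hP.end_mem i)
  refine exists_isLinkage_of_glue hP.disjoint hQ.disjoint (σ := σ) ?_ ?_ ?_
  · intro i i' h
    apply hP.injective fun i => le_refl (m i)
    apply (Equiv.swap x y).injective
    rw [← hσ i, ← hσ i', h]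
  · intro i j hij
    obtain ⟨v, hvP, hvQ⟩ := Set.not_disjoint_iff.mp hij
    obtain ⟨hvi, hvj, hvY⟩ := hY.eq_of_mem_walkVerts (hP.walk i) (hP.start_mem i)
      (fun t ht h => (hP' i).not_mem_right t ht (Or.inr h)) (hQ.walk j) (hQ.end_mem j)
      (fun t ht0 htn h => (hQ' j).not_mem_left t ht0 htn (Or.inr h)) hvP hvQ
    apply hQ.injective fun j => (n j).zero_le
    change Q (σ i) 0 = Q j 0
    rw [hσ, ← hvi, swap_apply_of_mem hxY hyY hvY, hvj]
  · intro i
    have hjoin : Q (σ i) 0 = P i (m i) ∨ R (P i (m i)) (Q (σ i) 0) := by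
      rw [hσ]
      rcases hP.end_mem i with hx | hv
      · right
        rwa [hx, Equiv.swap_apply_left]
      · exact Or.inl (swap_apply_of_mem hxY hyY hv)
    obtain ⟨w, l, hw, hw0, hwl, hsub⟩ := exists_walk_of_eq_or_adj
      ((hP.walk i).mono fun _ _ h => h.1) ((hQ.walk (σ i)).mono fun _ _ h => h.1) hjoin
    exact ⟨w, l, hw, hw0 ▸ hP.start_mem i, hwl ▸ hQ.end_mem _, hsub⟩

theorem exists_isLinkage_of_forall_le_ncard [Finite V] (R : V → V → Prop) (A B : Set V) (k : ℕ)
    (h : ∀ S, Separates R A B S → k ≤ S.ncard) :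
    ∃ (P : Fin k → ℕ → V) (len : Fin k → ℕ), IsLinkage R A B P len := by
  induction hN : (properEdges R).ncard using Nat.strong_induction_on generalizing R A B with
  | _ N ih =>
  by_cases hE : ∃ x y, R x y ∧ x ≠ y
  swap
  · push Not at hE
    exact exists_isLinkage_of_le_ncard_inter (h _ (separates_inter_of_loopless hE))
  obtain ⟨x, y, hxy, hne⟩ := hE
  have ih' := ih _ (hN ▸ ncard_properEdges_deleteEdge_lt hxy hne) (deleteEdge R x y)
  by_cases hY : ∃ Y, Separates (deleteEdge R x y) A B Y ∧ Y.ncard < k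
  · obtain ⟨Y, hY, hYk⟩ := hY
    have hkx := h _ (hY.of_deleteEdge_left separates_right_self)
    have hky := h _ (hY.of_deleteEdge_right separates_left_self)
    have hxY : x ∉ Y := fun hx => by rw [Set.insert_eq_of_mem hx] at hkx; omega
    have hyY : y ∉ Y := fun hy => by rw [Set.insert_eq_of_mem hy] at hky; omega
    obtain ⟨P, m, hP⟩ := ih' A (insert x Y) (fun Z hZ => h Z (hY.of_deleteEdge_left hZ)) rfl
    obtain ⟨Q, n, hQ⟩ := ih' (insert y Y) B (fun Z hZ => h Z (hY.of_deleteEdge_right hZ)) rfl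
    exact exists_isLinkage_of_deleteEdge hxy hxY hyY
      (by have := Set.ncard_insert_le y Y; omega) hY hP hQ
  · push Not at hY
    obtain ⟨P, len, hP⟩ := ih' A B hY rfl
    exact ⟨P, len, hP.mono fun _ _ h => h.1⟩

end Menger

theorem menger_digraph_general [Fintype V] (R : V → V → Prop) (k : ℕ) (A B : Set V) :
    (∃ (P : Fin k → ℕ → V) (len : Fin k → ℕ),
       (∀ i, IsPathOn R (P i) (len i) ∧ P i 0 ∈ A ∧ P i (len i) ∈ B) ∧
       ∀ i j, i ≠ j → Disjoint (walkVerts (P i) (len i)) (walkVerts (P j) (len j))) ∨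
    (∃ S : Set V, S.Finite ∧ S.ncard < k ∧
       ∀ (w : ℕ → V) (n : ℕ), IsPathOn R w n → w 0 ∈ A → w n ∈ B →
         ∃ i ≤ n, w i ∈ S) := by
  by_cases hS : ∃ S : Set V,
      (∀ (w : ℕ → V) (n : ℕ), IsPathOn R w n → w 0 ∈ A → w n ∈ B → ∃ i ≤ n, w i ∈ S) ∧
        S.ncard < k
  · obtain ⟨S, hS, hSk⟩ := hS
    exact Or.inr ⟨S, S.toFinite, hSk, hS⟩
  push Not at hS
  obtain ⟨P, len, hP⟩ := exists_isLinkage_of_forall_le_ncard R A B k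
    fun S hS' => hS S fun w n hw => hS' w n hw.1
  obtain ⟨P, len, hP, hpath⟩ := hP.exists_isPathFromTo
  exact Or.inl ⟨P, len, fun i => ⟨(hpath i).isPathOn, hP.start_mem i, hP.end_mem i⟩,
    fun i j hij => hP.disjoint hij⟩

/-- Menger's theorem for digraphs. -/
theorem menger_digraph [Fintype V] (R : V → V → Prop) (k : ℕ) (hk : 0 < k)
    (A B : Set V) :
    (∃ (P : Fin k → ℕ → V) (len : Fin k → ℕ),
       (∀ i, IsPathOn R (P i) (len i) ∧ P i 0 ∈ A ∧ P i (len i) ∈ B) ∧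
       ∀ i j, i ≠ j → Disjoint (walkVerts (P i) (len i)) (walkVerts (P j) (len j))) ∨
    (∃ S : Set V, S.Finite ∧ S.ncard < k ∧
       ∀ (w : ℕ → V) (n : ℕ), IsPathOn R w n → w 0 ∈ A → w n ∈ B →
         ∃ i ≤ n, w i ∈ S) :=
  menger_digraph_general R k A B
end

section
/- Let D be a digraph, X ⊆ V(D), and let W be a directed odd X-walk in D that contains no directed odd cycle. Then any shortest directed odd X-walk with the same endpoints as W contained in W is a directed path (has no repeated vertices); in particular, D contains a directed odd X-path with the same endpoints as W. -/
variable {V : Type}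

/-- Every closed odd walk contains a directed odd cycle using only its edges. -/
lemma closedOddCycle (R : V → V → Prop) :
    ∀ m : ℕ, ∀ c : ℕ → V, Odd m → IsWalkOn R c m → c m = c 0 →
      ∃ c' m', IsCycleOn R c' m' ∧ Odd m' ∧ walkEdges c' m' ⊆ walkEdges c m := by
  intro m
  induction m using Nat.strong_induction_on with
  | _ m ih =>
    intro c hodd hwalk hclosed
    by_cases hinj : ∀ i < m, ∀ j < m, c i = c j → i = j
    · exact ⟨c, m, ⟨hodd.pos, hwalk, hclosed, hinj⟩, hodd, subset_rfl⟩
    push_neg at hinj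
    obtain ⟨i0, hi0, j0, hj0, heq0, hne0⟩ := hinj
    have key : ∀ i j : ℕ, i < m → j < m → i < j → c i = c j →
        ∃ c' m', IsCycleOn R c' m' ∧ Odd m' ∧ walkEdges c' m' ⊆ walkEdges c m := by
      intro i j hi hj hij heq
      set m1 := j - i with hm1
      set m2 := m - (j - i) with hm2
      have hm1lt : m1 < m := by omega
      have hm2lt : m2 < m := by omega
      -- the first closed walk: the segment from i to j
      have hw1 : IsWalkOn R (fun k => c (i + k)) m1 := by
        intro k hk
        have h2 : i + k + 1 = i + (k + 1) := by omega
        simpa [h2] using hwalk (i + k) (by omega)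
      have hc1 : (fun k => c (i + k)) m1 = (fun k => c (i + k)) 0 := by
        simp only
        have h : i + m1 = j := by omega
        rw [h, ← heq, Nat.add_zero]
      have hsub1 : walkEdges (fun k => c (i + k)) m1 ⊆ walkEdges c m := by
        rintro e ⟨k, hk, h1, h2⟩
        refine ⟨i + k, by omega, h1, ?_⟩
        have h : i + k + 1 = i + (k + 1) := by omega
        rw [h]; exact h2
      -- the second closed walk: cut out the segment from i to j
      set c2 : ℕ → V := fun k => if k ≤ i then c k else c (k + (j - i)) with hc2def
      have hc2i : ∀ k ≤ i, c2 k = c k := fun k hk => if_pos hk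
      have hc2g : ∀ k, i < k → c2 k = c (k + (j - i)) := fun k hk => if_neg (by omega)
      have hw2 : IsWalkOn R c2 m2 := by
        intro k hk
        rcases lt_trichotomy k i with h | h | h
        · rw [hc2i k (by omega), hc2i (k + 1) (by omega)]
          exact hwalk k (by omega)
        · subst h
          rw [hc2i k le_rfl, hc2g (k + 1) (by omega)]
          have h : k + 1 + (j - k) = j + 1 := by omega
          rw [h, heq]
          exact hwalk j hj
        · rw [hc2g k h, hc2g (k + 1) (by omega)]
          have h : k + 1 + (j - i) = k + (j - i) + 1 := by omega
          rw [h]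
          exact hwalk (k + (j - i)) (by omega)
      have hc2closed : c2 m2 = c2 0 := by
        rw [hc2g m2 (by omega), hc2i 0 (by omega)]
        have h : m2 + (j - i) = m := by omega
        rw [h, hclosed]
      have hsub2 : walkEdges c2 m2 ⊆ walkEdges c m := by
        rintro e ⟨k, hk, h1, h2⟩
        rcases lt_trichotomy k i with h | h | h
        · refine ⟨k, by omega, ?_, ?_⟩
          · rw [← hc2i k (by omega)]; exact h1
          · rw [← hc2i (k + 1) (by omega)]; exact h2
        · subst h
          refine ⟨j, by omega, ?_, ?_⟩
          · rw [← heq, ← hc2i k le_rfl]; exact h1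
          · rw [← h2, hc2g (k + 1) (by omega)]
            congr 1; omega
        · refine ⟨k + (j - i), by omega, ?_, ?_⟩
          · rw [← hc2g k h]; exact h1
          · rw [← h2, hc2g (k + 1) (by omega)]
            congr 1; omega
      rcases Nat.even_or_odd m1 with he | ho
      · have ho2 : Odd m2 := Nat.Odd.sub_even (by omega) hodd he
        obtain ⟨c', m', hcyc, hodd', hsub⟩ := ih m2 hm2lt c2 ho2 hw2 hc2closed
        exact ⟨c', m', hcyc, hodd', hsub.trans hsub2⟩
      · obtain ⟨c', m', hcyc, hodd', hsub⟩ := ih m1 hm1lt _ ho hw1 hc1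
        exact ⟨c', m', hcyc, hodd', hsub.trans hsub1⟩
    rcases lt_trichotomy i0 j0 with h | h | h
    · exact key i0 j0 hi0 hj0 h heq0
    · exact absurd h hne0
    · exact key j0 i0 hj0 hi0 h heq0.symm

/-- If a directed odd X-walk W contains no directed odd cycle, then any
shortest directed odd X-walk contained in W with the same endpoints is a directed
path; in particular there is a directed odd X-path with the same endpoints. -/
theorem shortest_odd_X_walk_is_path (R : V → V → Prop) (X : Set V)
    (w : ℕ → V) (n : ℕ) (hw : IsXWalk R X w n) (hodd : Odd n)
    (hnoc : ¬ ∃ (c : ℕ → V) (m : ℕ), IsCycleOn R c m ∧ Odd m ∧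
      walkEdges c m ⊆ walkEdges w n) :
    (∀ (w' : ℕ → V) (n' : ℕ),
        IsXWalk R X w' n' → Odd n' → w' 0 = w 0 → w' n' = w n →
        walkEdges w' n' ⊆ walkEdges w n →
        (∀ (w'' : ℕ → V) (n'' : ℕ), IsXWalk R X w'' n'' → Odd n'' →
            w'' 0 = w 0 → w'' n'' = w n → walkEdges w'' n'' ⊆ walkEdges w n →
            n' ≤ n'') →
        ∀ i ≤ n', ∀ j ≤ n', w' i = w' j → i = j) ∧
    (∃ (p : ℕ → V) (np : ℕ), IsXWalk R X p np ∧ Odd np ∧ IsPathOn R p np ∧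
        p 0 = w 0 ∧ p np = w n) := by
  classical
  have part1 : ∀ (w' : ℕ → V) (n' : ℕ),
      IsXWalk R X w' n' → Odd n' → w' 0 = w 0 → w' n' = w n →
      walkEdges w' n' ⊆ walkEdges w n →
      (∀ (w'' : ℕ → V) (n'' : ℕ), IsXWalk R X w'' n'' → Odd n'' →
          w'' 0 = w 0 → w'' n'' = w n → walkEdges w'' n'' ⊆ walkEdges w n →
          n' ≤ n'') →
      ∀ i ≤ n', ∀ j ≤ n', w' i = w' j → i = j := by
    intro w' n' hw' hodd' h0 hn he hmin
    obtain ⟨hwalk', hX0, hXn, hXint⟩ := hw'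
    have key : ∀ i j : ℕ, i ≤ n' → j ≤ n' → i < j → w' i = w' j → False := by
      intro i j hi hj hij heq
      rcases Nat.even_or_odd (j - i) with heven | hoddseg
      · -- even segment: cut it out, contradicting minimality
        set d := j - i with hd
        have hdpos : 0 < d := by omega
        set n'' := n' - d with hn''
        set w2 : ℕ → V := fun k => if k ≤ i then w' k else w' (k + d) with hw2def
        have hw2i : ∀ k ≤ i, w2 k = w' k := fun k hk => if_pos hk
        have hw2g : ∀ k, i < k → w2 k = w' (k + d) := fun k hk => if_neg (by omega)
        have hin'' : i ≤ n'' := by omega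
        have hwalk2 : IsWalkOn R w2 n'' := by
          intro k hk
          rcases lt_trichotomy k i with h | h | h
          · rw [hw2i k (by omega), hw2i (k + 1) (by omega)]
            exact hwalk' k (by omega)
          · subst h
            rw [hw2i k le_rfl, hw2g (k + 1) (by omega)]
            have h : k + 1 + d = j + 1 := by omega
            rw [h, heq]
            exact hwalk' j (by omega)
          · rw [hw2g k h, hw2g (k + 1) (by omega)]
            have h : k + 1 + d = k + d + 1 := by omega
            rw [h]
            exact hwalk' (k + d) (by omega)
        have hend : w2 n'' = w' n' := by
          rcases eq_or_lt_of_le hin'' with h | h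
          · rw [hw2i n'' (le_of_eq h.symm)]
            have hji : j = n' := by omega
            rw [← h, heq, hji]
          · rw [hw2g n'' h]
            congr 1; omega
        have hXw2 : IsXWalk R X w2 n'' := by
          refine ⟨hwalk2, ?_, ?_, ?_⟩
          · rw [hw2i 0 (by omega)]; exact hX0
          · rw [hend]; exact hXn
          · intro k hk1 hk2
            rcases lt_trichotomy k i with h | h | h
            · rw [hw2i k (by omega)]
              exact hXint k hk1 (by omega)
            · subst h
              rw [hw2i k le_rfl, heq]
              exact hXint j (by omega) (by omega)
            · rw [hw2g k h]
              exact hXint (k + d) (by omega) (by omega)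
        have hodd2 : Odd n'' := Nat.Odd.sub_even (by omega) hodd' heven
        have hsub2 : walkEdges w2 n'' ⊆ walkEdges w' n' := by
          rintro e ⟨k, hk, h1, h2⟩
          rcases lt_trichotomy k i with h | h | h
          · refine ⟨k, by omega, ?_, ?_⟩
            · rw [← hw2i k (by omega)]; exact h1
            · rw [← hw2i (k + 1) (by omega)]; exact h2
          · subst h
            refine ⟨j, by omega, ?_, ?_⟩
            · rw [← heq, ← hw2i k le_rfl]; exact h1
            · rw [← h2, hw2g (k + 1) (by omega)]
              congr 1; omega
          · refine ⟨k + d, by omega, ?_, ?_⟩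
            · rw [← hw2g k h]; exact h1
            · rw [← h2, hw2g (k + 1) (by omega)]
              congr 1; omega
        have hmin2 := hmin w2 n'' hXw2 hodd2
          (by rw [hw2i 0 (by omega)]; exact h0)
          (by rw [hend]; exact hn) (hsub2.trans he)
        omega
      · -- odd segment: it is a closed odd walk, hence contains an odd cycle
        have hw1 : IsWalkOn R (fun k => w' (i + k)) (j - i) := by
          intro k hk
          have h2 : i + k + 1 = i + (k + 1) := by omega
          simpa [h2] using hwalk' (i + k) (by omega)
        have hc1 : (fun k => w' (i + k)) (j - i) = (fun k => w' (i + k)) 0 := by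
          simp only
          have h : i + (j - i) = j := by omega
          rw [h, ← heq, Nat.add_zero]
        obtain ⟨c', m', hcyc, hodd', hsub⟩ :=
          closedOddCycle R (j - i) (fun k => w' (i + k)) hoddseg hw1 hc1
        refine hnoc ⟨c', m', hcyc, hodd', hsub.trans ?_⟩
        refine Set.Subset.trans ?_ he
        rintro e ⟨k, hk, h1, h2⟩
        refine ⟨i + k, by omega, h1, ?_⟩
        have h : i + k + 1 = i + (k + 1) := by omega
        rw [h]; exact h2
    intro i hi j hj heq
    rcases lt_trichotomy i j with h | h | h
    · exact absurd (key i j hi hj h heq) (not_false)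
    · exact h
    · exact absurd (key j i hj hi h heq.symm) (not_false)
  refine ⟨part1, ?_⟩
  have hP : ∃ n' : ℕ, ∃ w' : ℕ → V, IsXWalk R X w' n' ∧ Odd n' ∧ w' 0 = w 0 ∧
      w' n' = w n ∧ walkEdges w' n' ⊆ walkEdges w n :=
    ⟨n, w, hw, hodd, rfl, rfl, subset_rfl⟩
  obtain ⟨w', h1, h2, h3, h4, h5⟩ := Nat.find_spec hP
  have hmin : ∀ (w'' : ℕ → V) (n'' : ℕ), IsXWalk R X w'' n'' → Odd n'' →
      w'' 0 = w 0 → w'' n'' = w n → walkEdges w'' n'' ⊆ walkEdges w n →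
      Nat.find hP ≤ n'' := by
    intro w'' n'' a b cc d ee
    exact Nat.find_min' hP ⟨w'', a, b, cc, d, ee⟩
  exact ⟨w', Nat.find hP, h1, h2, ⟨h1.1, part1 w' (Nat.find hP) h1 h2 h3 h4 h5 hmin⟩,
    h3, h4⟩
end
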